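/- arXiv:2010.02541 — 4 statements merged into one kernel-verified Lean document; each statement's English description precedes it below -/
import Mathlib

section
/- Let $\mathcal{F}$ be an $n$-uniform family and suppose there are $\lambda\in(0,1)$ and $T>0$ such that every proper subfamily $\mathcal{A}\subsetneq\mathcal{F}$ satisfies $c_n(\mathcal{A})\le T\lambda^{\tau(\mathcal{A})}$. If there exists a nonempty subfamily $\mathcal{F}'\subseteq\mathcal{F}$ with $c_{\lambda n}(\mathcal{F}')\le 1$, then $c_n(\mathcal{F})\le T\lambda^{\tau(\mathcal{F})}$. -/
/-!
Every minimal cover `C` of `𝓕` contains a minimal cover `D` of `𝓕'`, and `C \ D` is then a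
minimal cover of the subfamily `𝓕(D̄)` of members avoiding `D`; this subfamily is proper since
`D` meets the members of the nonempty `𝓕'`. Grouping the minimal covers of `𝓕` by such a `D`,
and using `τ(𝓕(D̄)) ≥ τ(𝓕) - |D|`,
`c_n(𝓕) ≤ ∑_D n^{-|D|} c_n(𝓕(D̄)) ≤ ∑_D n^{-|D|} T λ^{τ(𝓕) - |D|} = T λ^{τ(𝓕)} c_{λn}(𝓕') ≤ T λ^{τ(𝓕)}`.
-/

open Finset

variable {α : Type*}

/-- `C` is a cover of the family `𝓕`: it intersects every member. -/
def IsCover [DecidableEq α] (C : Finset α) (𝓕 : Finset (Finset α)) : Prop :=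
  ∀ A ∈ 𝓕, (C ∩ A).Nonempty

/-- The family of all minimal covers of `𝓕` of size at most `n`. -/
noncomputable def minCovers [Fintype α] [DecidableEq α] (n : ℕ)
    (𝓕 : Finset (Finset α)) : Finset (Finset α) := by
  classical
  exact univ.filter (fun C => C.card ≤ n ∧ IsCover C 𝓕 ∧
    ∀ C' ⊆ C, IsCover C' 𝓕 → C' = C)

/-- `c_λ(𝓕) = ∑_{C ∈ 𝓒(𝓕)} λ^{-|C|}`. -/
noncomputable def covWeight [Fintype α] [DecidableEq α] (n : ℕ) (lam : ℝ)
    (𝓕 : Finset (Finset α)) : ℝ :=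
  ∑ C ∈ minCovers n 𝓕, lam ^ (-(C.card : ℤ))

/-- The covering number `τ(𝓕)`: minimum size of a cover. -/
noncomputable def covNum [DecidableEq α] (𝓕 : Finset (Finset α)) : ℕ :=
  sInf {k | ∃ C : Finset α, C.card = k ∧ IsCover C 𝓕}

lemma sum_le_sum_sum_filter {ι κ M : Type*} [AddCommMonoid M] [PartialOrder M]
    [IsOrderedAddMonoid M] {s : Finset ι} {t : Finset κ} {f : ι → M} {r : κ → ι → Prop}
    [∀ k, DecidablePred (r k)] (hf : ∀ i ∈ s, 0 ≤ f i) (hr : ∀ i ∈ s, ∃ k ∈ t, r k i) :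
    ∑ i ∈ s, f i ≤ ∑ k ∈ t, ∑ i ∈ s with r k i, f i := by
  rw [sum_comm' (t' := s) (s' := fun i => {k ∈ t | r k i}) (by simp only [mem_filter]; tauto)]
  refine sum_le_sum fun i hi => ?_
  obtain ⟨k, hk, hki⟩ := hr i hi
  exact single_le_sum (f := fun _ => f i) (fun _ _ => hf i hi) (mem_filter.2 ⟨hk, hki⟩)

section

variable [DecidableEq α]

/-- The paper's `𝓕(D̄)`. -/
def avoiding (D : Finset α) (𝓕 : Finset (Finset α)) : Finset (Finset α) :=
  𝓕.filter (Disjoint · D)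

lemma mem_avoiding {D A : Finset α} {𝓕 : Finset (Finset α)} :
    A ∈ avoiding D 𝓕 ↔ A ∈ 𝓕 ∧ Disjoint A D :=
  mem_filter

lemma avoiding_subset (D : Finset α) (𝓕 : Finset (Finset α)) : avoiding D 𝓕 ⊆ 𝓕 :=
  filter_subset _ _

lemma mem_minCovers [Fintype α] {n : ℕ} {𝓕 : Finset (Finset α)} {C : Finset α} :
    C ∈ minCovers n 𝓕 ↔ C.card ≤ n ∧ Minimal (IsCover · 𝓕) C := by
  simp only [minCovers, mem_filter, mem_univ, true_and, minimal_iff]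
  grind

lemma IsCover.anti {C : Finset α} {𝓕 𝓖 : Finset (Finset α)} (hC : IsCover C 𝓕) (h : 𝓖 ⊆ 𝓕) :
    IsCover C 𝓖 :=
  fun A hA => hC A (h hA)

lemma IsCover.sdiff_avoiding {C : Finset α} {𝓕 : Finset (Finset α)} (hC : IsCover C 𝓕)
    (D : Finset α) : IsCover (C \ D) (avoiding D 𝓕) := by
  intro A hA
  rw [mem_avoiding] at hA
  obtain ⟨x, hx⟩ := hC A hA.1
  rw [mem_inter] at hx
  exact ⟨x, mem_inter.2 ⟨mem_sdiff.2 ⟨hx.1, disjoint_left.1 hA.2 hx.2⟩, hx.2⟩⟩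

lemma IsCover.union_of_avoiding {D E : Finset α} {𝓕 : Finset (Finset α)}
    (hE : IsCover E (avoiding D 𝓕)) : IsCover (D ∪ E) 𝓕 := by
  intro A hA
  by_cases hAD : Disjoint A D
  · exact (hE A (mem_avoiding.2 ⟨hA, hAD⟩)).mono (inter_subset_inter_right subset_union_right)
  · obtain ⟨x, hxA, hxD⟩ := not_disjoint_iff.1 hAD
    exact ⟨x, mem_inter.2 ⟨mem_union_left _ hxD, hxA⟩⟩

lemma avoiding_ne_self {D : Finset α} {𝓕 𝓕' : Finset (Finset α)} (h𝓕' : 𝓕' ⊆ 𝓕)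
    (hne : 𝓕'.Nonempty) (hD : IsCover D 𝓕') : avoiding D 𝓕 ≠ 𝓕 := by
  obtain ⟨A, hA⟩ := hne
  obtain ⟨x, hx⟩ := hD A hA
  intro h
  have hAD : Disjoint A D := (mem_avoiding.1 (h ▸ h𝓕' hA)).2
  exact disjoint_left.1 hAD (mem_inter.1 hx).2 (mem_inter.1 hx).1

lemma minimal_isCover_sdiff_avoiding {C D : Finset α} {𝓕 : Finset (Finset α)}
    (hC : Minimal (IsCover · 𝓕) C) (hDC : D ⊆ C) :
    Minimal (IsCover · (avoiding D 𝓕)) (C \ D) := by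
  refine ⟨hC.1.sdiff_avoiding D, fun E hE hEC => ?_⟩
  have hDE : D ∪ E = C :=
    hC.eq_of_le hE.union_of_avoiding (union_subset hDC (hEC.trans sdiff_subset))
  rw [← hDE, union_sdiff_left]
  exact sdiff_subset

lemma exists_mem_minCovers_subset [Fintype α] {n : ℕ} {𝓕 𝓕' : Finset (Finset α)}
    {C : Finset α} (h : 𝓕' ⊆ 𝓕) (hC : C ∈ minCovers n 𝓕) : ∃ D ∈ minCovers n 𝓕', D ⊆ C := by
  rw [mem_minCovers] at hC
  obtain ⟨D, hDC, hD⟩ := exists_minimal_le_of_wellFoundedLT (IsCover · 𝓕') C (hC.2.1.anti h)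
  exact ⟨D, mem_minCovers.2 ⟨(card_le_card hDC).trans hC.1, hD⟩, hDC⟩

lemma covNum_le {𝓕 : Finset (Finset α)} {C : Finset α} (hC : IsCover C 𝓕) : covNum 𝓕 ≤ C.card :=
  Nat.sInf_le ⟨C, rfl, hC⟩

lemma IsCover.exists_card_eq_covNum {𝓕 : Finset (Finset α)} {C : Finset α} (hC : IsCover C 𝓕) :
    ∃ E : Finset α, E.card = covNum 𝓕 ∧ IsCover E 𝓕 :=
  Nat.sInf_mem (s := {k | ∃ E : Finset α, E.card = k ∧ IsCover E 𝓕}) ⟨C.card, C, rfl, hC⟩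

lemma covNum_le_covNum_avoiding_add_card {𝓕 : Finset (Finset α)} {C : Finset α}
    (hC : IsCover C 𝓕) (D : Finset α) : covNum 𝓕 ≤ covNum (avoiding D 𝓕) + D.card := by
  obtain ⟨E, hE, hEcov⟩ := (hC.anti (avoiding_subset D 𝓕)).exists_card_eq_covNum
  calc covNum 𝓕 ≤ (D ∪ E).card := covNum_le hEcov.union_of_avoiding
    _ ≤ D.card + E.card := card_union_le _ _
    _ = covNum (avoiding D 𝓕) + D.card := by rw [hE, add_comm]

lemma sum_minCovers_superset_le [Fintype α] {n : ℕ} {μ : ℝ} (hμ : 0 ≤ μ)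
    (𝓕 : Finset (Finset α)) (D : Finset α) :
    ∑ C ∈ minCovers n 𝓕 with D ⊆ C, μ ^ (-(C.card : ℤ)) ≤
      μ ^ (-(D.card : ℤ)) * covWeight n μ (avoiding D 𝓕) := by
  set s := {C ∈ minCovers n 𝓕 | D ⊆ C}
  have hs : ∀ C ∈ s, D ⊆ C ∧ C ∈ minCovers n 𝓕 := fun C hC => (mem_filter.1 hC).symm
  rw [covWeight, mul_sum]
  calc ∑ C ∈ s, μ ^ (-(C.card : ℤ))
      = ∑ C ∈ s, μ ^ (-(D.card : ℤ)) * μ ^ (-((C \ D).card : ℤ)) := by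
        refine sum_congr rfl fun C hC => ?_
        simp only [zpow_neg, zpow_natCast, ← mul_inv, ← pow_add,
          card_sdiff_add_card_eq_card (hs C hC).1, add_comm D.card]
    _ = ∑ E ∈ s.image (· \ D), μ ^ (-(D.card : ℤ)) * μ ^ (-(E.card : ℤ)) :=
        (sum_image (f := fun E => μ ^ (-(D.card : ℤ)) * μ ^ (-(E.card : ℤ)))
          fun C hC C' hC' => superset_injOn_sdiff D (hs C hC).1 (hs C' hC').1).symm
    _ ≤ ∑ E ∈ minCovers n (avoiding D 𝓕), μ ^ (-(D.card : ℤ)) * μ ^ (-(E.card : ℤ)) := by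
        refine sum_le_sum_of_subset_of_nonneg ?_ fun _ _ _ => by positivity
        intro E hE
        obtain ⟨C, hC, rfl⟩ := mem_image.1 hE
        obtain ⟨hDC, hCF⟩ := hs C hC
        obtain ⟨hCcard, hCmin⟩ := mem_minCovers.1 hCF
        exact mem_minCovers.2 ⟨(card_le_card sdiff_subset).trans hCcard,
          minimal_isCover_sdiff_avoiding hCmin hDC⟩

lemma zpow_mul_covWeight_avoiding_le [Fintype α] {n : ℕ} {𝓕 : Finset (Finset α)}
    {C D : Finset α} {μ lam T : ℝ} (hμ : 0 ≤ μ) (hl0 : 0 < lam) (hl1 : lam ≤ 1) (hT : 0 ≤ T)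
    (hC : IsCover C 𝓕) (h : covWeight n μ (avoiding D 𝓕) ≤ T * lam ^ covNum (avoiding D 𝓕)) :
    μ ^ (-(D.card : ℤ)) * covWeight n μ (avoiding D 𝓕) ≤
      T * lam ^ covNum 𝓕 * (lam * μ) ^ (-(D.card : ℤ)) := by
  have hlam : lam ^ covNum (avoiding D 𝓕) ≤ lam ^ covNum 𝓕 * lam ^ (-(D.card : ℤ)) := by
    rw [zpow_neg, zpow_natCast, ← div_eq_mul_inv, le_div_iff₀ (pow_pos hl0 _), ← pow_add]
    exact pow_le_pow_of_le_one hl0.le hl1 (covNum_le_covNum_avoiding_add_card hC D)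
  calc μ ^ (-(D.card : ℤ)) * covWeight n μ (avoiding D 𝓕)
      ≤ μ ^ (-(D.card : ℤ)) * (T * (lam ^ covNum 𝓕 * lam ^ (-(D.card : ℤ)))) := by
        gcongr
        exact h.trans (mul_le_mul_of_nonneg_left hlam hT)
    _ = T * lam ^ covNum 𝓕 * (lam * μ) ^ (-(D.card : ℤ)) := by rw [mul_zpow]; ring

end

theorem stmt3_general [Fintype α] [DecidableEq α] (n : ℕ) (𝓕 : Finset (Finset α))
    (lam T : ℝ) (hl0 : 0 < lam) (hl1 : lam < 1) (hT : 0 < T)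
    (hyp : ∀ 𝓐 ⊆ 𝓕, 𝓐 ≠ 𝓕 → covWeight n (n : ℝ) 𝓐 ≤ T * lam ^ covNum 𝓐)
    (𝓕' : Finset (Finset α)) (h1 : 𝓕' ⊆ 𝓕) (h2 : 𝓕'.Nonempty)
    (h3 : covWeight n (lam * n) 𝓕' ≤ 1) :
    covWeight n (n : ℝ) 𝓕 ≤ T * lam ^ covNum 𝓕 := by
  rcases (minCovers n 𝓕).eq_empty_or_nonempty with h𝓕 | ⟨C₀, hC₀⟩
  · rw [covWeight, h𝓕, sum_empty]
    positivity
  have hn : (0 : ℝ) ≤ n := n.cast_nonneg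
  calc covWeight n n 𝓕
      ≤ ∑ D ∈ minCovers n 𝓕', ∑ C ∈ minCovers n 𝓕 with D ⊆ C, (n : ℝ) ^ (-(C.card : ℤ)) :=
        sum_le_sum_sum_filter (fun _ _ => by positivity)
          fun _ hC => exists_mem_minCovers_subset h1 hC
    _ ≤ ∑ D ∈ minCovers n 𝓕', (n : ℝ) ^ (-(D.card : ℤ)) * covWeight n n (avoiding D 𝓕) :=
        sum_le_sum fun D _ => sum_minCovers_superset_le hn 𝓕 D
    _ ≤ ∑ D ∈ minCovers n 𝓕', T * lam ^ covNum 𝓕 * (lam * n) ^ (-(D.card : ℤ)) :=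
        sum_le_sum fun D hD => zpow_mul_covWeight_avoiding_le hn hl0 hl1.le hT.le
          (mem_minCovers.1 hC₀).2.1 (hyp _ (avoiding_subset D 𝓕)
            (avoiding_ne_self h1 h2 (mem_minCovers.1 hD).2.1))
    _ = T * lam ^ covNum 𝓕 * covWeight n (lam * n) 𝓕' := by rw [covWeight, mul_sum]
    _ ≤ T * lam ^ covNum 𝓕 := mul_le_of_le_one_right (by positivity) h3

theorem stmt3 [Fintype α] [DecidableEq α] (n : ℕ) (𝓕 : Finset (Finset α))
    (hunif : ∀ A ∈ 𝓕, A.card = n) (lam T : ℝ) (hl0 : 0 < lam) (hl1 : lam < 1) (hT : 0 < T)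
    (hyp : ∀ 𝓐 ⊆ 𝓕, 𝓐 ≠ 𝓕 → covWeight n (n : ℝ) 𝓐 ≤ T * lam ^ covNum 𝓐)
    (𝓕' : Finset (Finset α)) (h1 : 𝓕' ⊆ 𝓕) (h2 : 𝓕'.Nonempty)
    (h3 : covWeight n (lam * n) 𝓕' ≤ 1) :
    covWeight n (n : ℝ) 𝓕 ≤ T * lam ^ covNum 𝓕 :=
  stmt3_general n 𝓕 lam T hl0 hl1 hT hyp 𝓕' h1 h2 h3
end

section
/- Let $X$ be a finite set, $f:X\to\mathbb{R}_{\ge 0}$ nonzero, and $\mathcal{F}$ a nonempty family of subsets of $X$ with $\tau(\mathcal{F})\ge 2$. Then there exists $F\in\mathcal{F}$ with $f(F)\le f(X)\left(1-|\mathcal{F}|^{-1/(\tau(\mathcal{F})-1)}\right)$. -/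
/-!
Normalise `f` to a probability distribution `w` and choose `t` points of `X` independently
according to `w`. A set `F` is missed by all of them with probability `(1 - w(F))^t`, so if
`∑_F (1 - w(F))^t < 1` some choice of `t` points is a cover. Hence
`∑_{F ∈ 𝓕} (1 - w(F))^(τ - 1) ≥ 1`, and the largest term is at least `1/|𝓕|`.
Derandomised, the points are chosen one at a time, each one so that the expected number of
sets missed by all points stays below one.
-/

open Finset

variable {α : Type*}

section Cover

variable [DecidableEq α] {C : Finset α} {𝓕 : Finset (Finset α)}

lemma IsCover.covNum_le_card (hC : IsCover C 𝓕) : covNum 𝓕 ≤ C.card :=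
  Nat.sInf_le ⟨C, rfl, hC⟩

lemma isCover_empty_iff : IsCover ∅ 𝓕 ↔ 𝓕 = ∅ := by
  simp [IsCover, eq_empty_iff_forall_notMem]

lemma IsCover.insert_of_filter_notMem {x : α} (hC : IsCover C {F ∈ 𝓕 | x ∉ F}) :
    IsCover (insert x C) 𝓕 := by
  intro A hA
  by_cases hxA : x ∈ A
  · exact ⟨x, mem_inter.2 ⟨mem_insert_self x C, hxA⟩⟩
  · obtain ⟨y, hy⟩ := hC A (mem_filter.2 ⟨hA, hxA⟩)
    exact ⟨y, inter_subset_inter_right (subset_insert x C) hy⟩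

end Cover

section Weights

variable [Fintype α] [DecidableEq α]

lemma sum_mul_sum_filter_notMem {R : Type*} [CommRing R] (w : α → R)
    (𝓖 : Finset (Finset α)) (g : Finset α → R) :
    ∑ x, w x * ∑ F ∈ 𝓖 with x ∉ F, g F = ∑ F ∈ 𝓖, (∑ x, w x - ∑ x ∈ F, w x) * g F := by
  simp_rw [mul_sum, sum_filter]
  rw [sum_comm]
  refine sum_congr rfl fun F _ => ?_
  rw [← sum_compl_add_sum F w, add_sub_cancel_right, sum_mul, ← sum_filter]
  exact sum_congr (by ext; simp) fun _ _ => rfl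

/-- First-moment argument: if the expected number of members of `𝓖` missed by `t` random
points drawn with weights `w` is less than one, some `t` points cover `𝓖`. -/
lemma exists_isCover_card_le_of_sum_pow_lt {R : Type*} [CommRing R] [LinearOrder R]
    [IsStrictOrderedRing R] (w : α → R) (hw : ∀ x, 0 ≤ w x) (t : ℕ)
    (𝓖 : Finset (Finset α))
    (h : ∑ F ∈ 𝓖, (∑ x, w x - ∑ x ∈ F, w x) ^ t < (∑ x, w x) ^ t) :
    ∃ C : Finset α, C.card ≤ t ∧ IsCover C 𝓖 := by
  set S := ∑ x, w x
  induction t generalizing 𝓖 with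
  | zero =>
    simp only [pow_zero, sum_const, nsmul_one, Nat.cast_lt_one, card_eq_zero] at h
    exact ⟨∅, le_rfl, isCover_empty_iff.2 h⟩
  | succ t ih =>
    set v : α → R := fun x => ∑ F ∈ 𝓖 with x ∉ F, (S - ∑ y ∈ F, w y) ^ t
    have hwv : ∑ x, w x * v x < ∑ x, w x * S ^ t :=
      calc ∑ x, w x * v x = ∑ F ∈ 𝓖, (S - ∑ x ∈ F, w x) ^ (t + 1) := by
            rw [sum_mul_sum_filter_notMem]
            exact sum_congr rfl fun F _ => (pow_succ' _ _).symm
        _ < S ^ (t + 1) := h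
        _ = ∑ x, w x * S ^ t := by rw [← sum_mul, pow_succ']
    obtain ⟨x, -, hx⟩ := exists_lt_of_sum_lt hwv
    obtain ⟨C, hCt, hC⟩ := ih _ (lt_of_mul_lt_mul_left hx (hw x))
    exact ⟨insert x C, (card_insert_le x C).trans (Nat.succ_le_succ hCt),
      hC.insert_of_filter_notMem⟩

/-- The inequality `∑_{F ∈ 𝓕} (1 - w(F)/w(X))^(τ(𝓕) - 1) ≥ 1`, cleared of denominators. -/
lemma pow_le_sum_sub_pow_covNum_sub_one {R : Type*} [CommRing R] [LinearOrder R]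
    [IsStrictOrderedRing R] (w : α → R) (hw : ∀ x, 0 ≤ w x) {𝓕 : Finset (Finset α)}
    (h𝓕 : 𝓕.Nonempty) :
    (∑ x, w x) ^ (covNum 𝓕 - 1) ≤ ∑ F ∈ 𝓕, (∑ x, w x - ∑ x ∈ F, w x) ^ (covNum 𝓕 - 1) := by
  by_contra! h
  obtain ⟨C, hCt, hC⟩ := exists_isCover_card_le_of_sum_pow_lt w hw _ 𝓕 h
  have hτ : covNum 𝓕 = 0 := by have := hC.covNum_le_card; omega
  simp only [hτ, zero_tsub, pow_zero, sum_const, nsmul_one, Nat.cast_lt_one,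
    card_eq_zero] at h
  exact h𝓕.ne_empty h

end Weights

lemma Real.rpow_neg_one_div_natCast_pow {x : ℝ} (hx : 0 ≤ x) {n : ℕ} (hn : n ≠ 0) :
    (x ^ (-1 / (n : ℝ))) ^ n = x⁻¹ := by
  rw [neg_div, one_div, Real.rpow_neg hx, inv_pow, Real.rpow_inv_natCast_pow hx hn]

theorem stmt8_general [Fintype α] [DecidableEq α] (f : α → ℝ) (hf0 : ∀ x, 0 ≤ f x)
    (𝓕 : Finset (Finset α)) (hne : 𝓕.Nonempty) (htau : 2 ≤ covNum 𝓕) :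
    ∃ F ∈ 𝓕, ∑ x ∈ F, f x ≤
      (∑ x, f x) * (1 - (𝓕.card : ℝ) ^ (-(1 : ℝ) / ((covNum 𝓕 : ℝ) - 1))) := by
  set t := covNum 𝓕 - 1
  rw [show (covNum 𝓕 : ℝ) - 1 = t by push_cast [t, Nat.cast_sub (by omega : 1 ≤ covNum 𝓕)]; rfl]
  set S := ∑ x, f x
  set c := (𝓕.card : ℝ) ^ (-(1 : ℝ) / t)
  have hm : 0 < (𝓕.card : ℝ) := by exact_mod_cast hne.card_pos
  have hct : c ^ t = (𝓕.card : ℝ)⁻¹ := Real.rpow_neg_one_div_natCast_pow hm.le (by omega)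
  by_contra! h
  have hlt : ∀ F ∈ 𝓕, (S - ∑ x ∈ F, f x) ^ t < (S * c) ^ t := fun F hF =>
    pow_lt_pow_left₀ (by linarith [h F hF]) (sub_nonneg.2 (sum_le_univ_sum_of_nonneg hf0))
      (by omega)
  have hsum := sum_lt_sum_of_nonempty hne hlt
  rw [sum_const, nsmul_eq_mul, mul_pow, hct, mul_left_comm, mul_inv_cancel₀ hm.ne',
    mul_one] at hsum
  exact (pow_le_sum_sub_pow_covNum_sub_one f hf0 hne).not_gt hsum

theorem stmt8 [Fintype α] [DecidableEq α] (f : α → ℝ) (hf0 : ∀ x, 0 ≤ f x) (hfne : f ≠ 0)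
    (𝓕 : Finset (Finset α)) (hne : 𝓕.Nonempty) (htau : 2 ≤ covNum 𝓕) :
    ∃ F ∈ 𝓕, ∑ x ∈ F, f x ≤
      (∑ x, f x) * (1 - (𝓕.card : ℝ) ^ (-(1 : ℝ) / ((covNum 𝓕 : ℝ) - 1))) :=
  stmt8_general f hf0 𝓕 hne htau
end

section
/- Let $X$ be a finite set, let $f_1,\dots,f_l:X\to\mathbb{R}_{\ge 0}$ be nonzero functions, and let $\mathcal{F}$ be a nonempty family of subsets of $X$ with $\tau(\mathcal{F})\ge 2$. Then there exists $F\in\mathcal{F}$ such that for every $i=1,\dots,l$, $f_i(F)\le f_i(X)\,l\,(1-|\mathcal{F}|^{-1/(\tau(\mathcal{F})-1)})$. -/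
open Finset

variable {α : Type*}

/-! The weight `g = (1/l) ∑ᵢ fᵢ / fᵢ(X)` is a probability weight with `fᵢ(F) ≤ l fᵢ(X) g(F)`, so it
suffices to find `F ∈ 𝓕` with `g(F) ≤ 1 - |𝓕|^(-1/(τ-1))`. A tuple of `t = τ - 1` points is not a
cover, hence avoids some `F ∈ 𝓕`; the union bound over `𝓕` gives `1 ≤ ∑_F (1 - g(F))^t`, so some
`F` has `(1 - g(F))^t ≥ 1/|𝓕|`. -/

lemma not_isCover_of_card_lt_covNum [DecidableEq α] {𝓕 : Finset (Finset α)} {C : Finset α}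
    (hC : C.card < covNum 𝓕) : ¬IsCover C 𝓕 :=
  fun hcov => hC.not_ge (Nat.sInf_le ⟨C, rfl, hcov⟩)

lemma exists_forall_notMem_of_lt_covNum [DecidableEq α] {𝓕 : Finset (Finset α)} {t : ℕ}
    (ht : t < covNum 𝓕) (v : Fin t → α) : ∃ F ∈ 𝓕, ∀ j, v j ∉ F := by
  by_contra! h
  refine not_isCover_of_card_lt_covNum (C := univ.image v)
    ((card_image_le.trans_eq (card_fin t)).trans_lt ht) fun A hA => ?_
  obtain ⟨j, hj⟩ := h A hA
  exact ⟨v j, mem_inter.2 ⟨mem_image_of_mem v (mem_univ j), hj⟩⟩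

lemma pow_sum_le_sum_pow_sum_compl [Fintype α] [DecidableEq α] {g : α → ℝ}
    (hg : ∀ x, 0 ≤ g x) {𝓕 : Finset (Finset α)} {t : ℕ}
    (hmiss : ∀ v : Fin t → α, ∃ F ∈ 𝓕, ∀ j, v j ∉ F) :
    (∑ x, g x) ^ t ≤ ∑ F ∈ 𝓕, (∑ x ∈ Fᶜ, g x) ^ t := by
  calc (∑ x, g x) ^ t = ∑ v : Fin t → α, ∏ j, g (v j) := by rw [sum_pow', Fintype.piFinset_univ]
    _ ≤ ∑ v, ∑ F ∈ 𝓕, if v ∈ Fintype.piFinset (fun _ => Fᶜ) then ∏ j, g (v j) else 0 := by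
        gcongr with v
        obtain ⟨F, hF, hv⟩ := hmiss v
        refine le_trans ?_ (single_le_sum (fun F _ => ?_) hF)
        · simp [hv]
        · split_ifs
          exacts [prod_nonneg fun j _ => hg (v j), le_rfl]
    _ = ∑ F ∈ 𝓕, (∑ x ∈ Fᶜ, g x) ^ t := by
        rw [sum_comm]
        refine sum_congr rfl fun F _ => ?_
        rw [sum_pow']
        convert sum_ite_mem_eq _ _

lemma rpow_neg_one_div_le_of_inv_le_pow {a c : ℝ} {t : ℕ} (ht : t ≠ 0) (ha : 0 ≤ a)
    (hc : 0 < c) (h : c⁻¹ ≤ a ^ t) : c ^ (-(1 : ℝ) / t) ≤ a :=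
  calc c ^ (-(1 : ℝ) / t) = c⁻¹ ^ (t⁻¹ : ℝ) := by
        rw [Real.inv_rpow hc.le, ← Real.rpow_neg hc.le, neg_div, one_div]
    _ ≤ (a ^ t) ^ (t⁻¹ : ℝ) := Real.rpow_le_rpow (inv_nonneg.2 hc.le) h (by positivity)
    _ = a := Real.pow_rpow_inv_natCast ha ht

theorem exists_mem_sum_le_one_sub_rpow [Fintype α] [DecidableEq α] {g : α → ℝ}
    (hg0 : ∀ x, 0 ≤ g x) (hg1 : ∑ x, g x = 1) {𝓕 : Finset (Finset α)} (hne : 𝓕.Nonempty)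
    {t : ℕ} (ht : t ≠ 0) (hmiss : ∀ v : Fin t → α, ∃ F ∈ 𝓕, ∀ j, v j ∉ F) :
    ∃ F ∈ 𝓕, ∑ x ∈ F, g x ≤ 1 - (𝓕.card : ℝ) ^ (-(1 : ℝ) / t) := by
  have hcard : (0 : ℝ) < 𝓕.card := by exact_mod_cast hne.card_pos
  have hsum : ∑ _F ∈ 𝓕, (𝓕.card : ℝ)⁻¹ ≤ ∑ F ∈ 𝓕, (∑ x ∈ Fᶜ, g x) ^ t := by
    rw [sum_const, nsmul_eq_mul, mul_inv_cancel₀ hcard.ne', ← one_pow t, ← hg1]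
    exact pow_sum_le_sum_pow_sum_compl hg0 hmiss
  obtain ⟨F, hF, hFpow⟩ := exists_le_of_sum_le hne hsum
  have hcompl : ∑ x ∈ Fᶜ, g x = 1 - ∑ x ∈ F, g x := by
    rw [← hg1, ← sum_compl_add_sum F]
    ring
  have hroot := rpow_neg_one_div_le_of_inv_le_pow ht (sum_nonneg fun x _ => hg0 x) hcard hFpow
  exact ⟨F, hF, by linarith⟩

theorem exists_mem_sum_le_one_sub_card_rpow_covNum [Fintype α] [DecidableEq α] {g : α → ℝ}
    (hg0 : ∀ x, 0 ≤ g x) (hg1 : ∑ x, g x = 1) {𝓕 : Finset (Finset α)} (hne : 𝓕.Nonempty)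
    (htau : 2 ≤ covNum 𝓕) :
    ∃ F ∈ 𝓕, ∑ x ∈ F, g x ≤ 1 - (𝓕.card : ℝ) ^ (-(1 : ℝ) / ((covNum 𝓕 : ℝ) - 1)) := by
  have hcast : ((covNum 𝓕 - 1 : ℕ) : ℝ) = covNum 𝓕 - 1 := by
    rw [Nat.cast_sub (by omega), Nat.cast_one]
  rw [← hcast]
  exact exists_mem_sum_le_one_sub_rpow hg0 hg1 hne (by omega)
    (exists_forall_notMem_of_lt_covNum (by omega))

theorem exists_mem_forall_sum_le_card_mul_of_forall_normalized {ι : Type*} [Fintype ι]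
    [Fintype α] {𝓕 : Finset (Finset α)} (hne : 𝓕.Nonempty) {q : ℝ}
    (hq : ∀ g : α → ℝ, (∀ x, 0 ≤ g x) → ∑ x, g x = 1 → ∃ F ∈ 𝓕, ∑ x ∈ F, g x ≤ q)
    {f : ι → α → ℝ} (hf0 : ∀ i x, 0 ≤ f i x) (hfne : ∀ i, f i ≠ 0) :
    ∃ F ∈ 𝓕, ∀ i, ∑ x ∈ F, f i x ≤ (∑ x, f i x) * Fintype.card ι * q := by
  rcases isEmpty_or_nonempty ι with _ | _
  · obtain ⟨F, hF⟩ := hne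
    exact ⟨F, hF, isEmptyElim⟩
  have hS : ∀ i, 0 < ∑ x, f i x := fun i => by
    obtain ⟨x, hx⟩ := Function.ne_iff.1 (hfne i)
    exact sum_pos' (fun y _ => hf0 i y) ⟨x, mem_univ x, (hf0 i x).lt_of_ne' hx⟩
  have hn : (0 : ℝ) < Fintype.card ι := by exact_mod_cast Fintype.card_pos
  have hw : ∀ i x, 0 ≤ f i x / ((∑ y, f i y) * Fintype.card ι) := fun i x =>
    div_nonneg (hf0 i x) (mul_pos (hS i) hn).le
  set g : α → ℝ := fun x => ∑ i, f i x / ((∑ y, f i y) * Fintype.card ι)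
  have hg1 : ∑ x, g x = 1 := by
    calc ∑ x, g x = ∑ i, (∑ x, f i x) / ((∑ y, f i y) * Fintype.card ι) := by
          simp only [g, sum_div]
          exact sum_comm
      _ = ∑ _i : ι, (Fintype.card ι : ℝ)⁻¹ :=
          sum_congr rfl fun i _ => by field_simp [(hS i).ne']
      _ = 1 := by rw [sum_const, card_univ, nsmul_eq_mul, mul_inv_cancel₀ hn.ne']
  obtain ⟨F, hF, hgF⟩ := hq g (fun x => sum_nonneg fun i _ => hw i x) hg1
  refine ⟨F, hF, fun i => ?_⟩
  have hfi : (∑ x ∈ F, f i x) / ((∑ y, f i y) * Fintype.card ι) ≤ ∑ x ∈ F, g x := by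
    rw [sum_div]
    gcongr with x
    exact single_le_sum (fun j _ => hw j x) (mem_univ i)
  rw [div_le_iff₀ (mul_pos (hS i) hn)] at hfi
  calc ∑ x ∈ F, f i x ≤ (∑ x ∈ F, g x) * ((∑ y, f i y) * Fintype.card ι) := hfi
    _ ≤ q * ((∑ y, f i y) * Fintype.card ι) :=
        mul_le_mul_of_nonneg_right hgF (mul_pos (hS i) hn).le
    _ = (∑ x, f i x) * Fintype.card ι * q := by ring

theorem stmt9 [Fintype α] [DecidableEq α] (l : ℕ) (f : Fin l → α → ℝ)
    (hf0 : ∀ i x, 0 ≤ f i x) (hfne : ∀ i, f i ≠ 0)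
    (𝓕 : Finset (Finset α)) (hne : 𝓕.Nonempty) (htau : 2 ≤ covNum 𝓕) :
    ∃ F ∈ 𝓕, ∀ i, ∑ x ∈ F, f i x ≤
      (∑ x, f i x) * l * (1 - (𝓕.card : ℝ) ^ (-(1 : ℝ) / ((covNum 𝓕 : ℝ) - 1))) := by
  simpa only [Fintype.card_fin] using exists_mem_forall_sum_le_card_mul_of_forall_normalized hne
    (fun g hg0 hg1 => exists_mem_sum_le_one_sub_card_rpow_covNum hg0 hg1 hne htau) hf0 hfne
end

section
/- Let $n\ge 1$, $m,t\ge 1$, and let $\mathcal{A}$ be an $n$-uniform family with $|\mathcal{A}|\le e^m$ and $\tau(\mathcal{A})\ge t$. Then for every $l\ge 1$ there exists a subfamily $\mathcal{A}'\subseteq\mathcal{A}$ with $\tau(\mathcal{A}\setminus\mathcal{A}')\le t/2$ such that for every $i=1,\dots,l$, $\mathbb{E}_{A_1,\dots,A_i\in\mathcal{A}'}|A_1\cap\dots\cap A_i|\le C_l\,(m/t)^{i-1}\,n$, where $C_l$ is a constant depending only on $l$ with $C_l=O(2^{l^2})$, and the expectation is over uniform independent choices of $A_1,\dots,A_i$ from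 $\mathcal{A}'$. -/
open Finset

variable {α : Type*}

/-!
Let `θ = 4m/t`. Greedily pick a point lying in more than a `θ`-fraction of the current family and
discard the members through it. Each step shrinks the family by a factor `1 - θ ≤ e^{-θ}`, so while
it is nonempty at most `m/θ = t/4` steps can occur and the chosen points form a cover of the
discarded members of size at most `t/2`. In the surviving family `𝓑` every point has degree
`d(x) ≤ θ|𝓑|`, and `∑_{A_1,…,A_i} |A_1 ∩ ⋯ ∩ A_i| = ∑_x d(x)^i ≤ (θ|𝓑|)^{i-1} n|𝓑|`, which gives
the bound with `C_l = 4^{l-1}`.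
-/

section

variable [DecidableEq α]

def IsSpread (θ : ℝ) (𝓑 : Finset (Finset α)) : Prop :=
  ∀ x, (#{A ∈ 𝓑 | x ∈ A} : ℝ) ≤ θ * #𝓑

lemma isSpread_of_one_le {θ : ℝ} (hθ : 1 ≤ θ) (𝓑 : Finset (Finset α)) : IsSpread θ 𝓑 := fun _ =>
  calc (#{A ∈ 𝓑 | _ ∈ A} : ℝ) ≤ #𝓑 := by exact_mod_cast card_filter_le _ _
    _ ≤ θ * #𝓑 := le_mul_of_one_le_left (Nat.cast_nonneg _) hθ

lemma covNum_le_card {𝓕 : Finset (Finset α)} {C : Finset α} (h : IsCover C 𝓕) :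
    covNum 𝓕 ≤ #C :=
  Nat.sInf_le ⟨C, rfl, h⟩

lemma covNum_empty : covNum (∅ : Finset (Finset α)) = 0 :=
  Nat.le_zero.mp (covNum_le_card (C := ∅) fun _ h => absurd h (notMem_empty _))

lemma exists_isSpread_and_isCover_sdiff {θ : ℝ} (hθ0 : 0 ≤ θ) (hθ1 : θ < 1)
    (𝓐 : Finset (Finset α)) :
    ∃ 𝓑 ⊆ 𝓐, IsSpread θ 𝓑 ∧ ∃ C : Finset α, IsCover C (𝓐 \ 𝓑) ∧
      -- the family was still nonempty when the last point of `C` was chosen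
      (C.Nonempty → 1 ≤ (1 - θ) ^ (#C - 1) * #𝓐) := by
  induction 𝓐 using Finset.strongInduction with
  | H 𝓐 ih =>
  by_cases h𝓐 : IsSpread θ 𝓐
  · exact ⟨𝓐, Subset.rfl, h𝓐, ∅, by simp [IsCover], by simp⟩
  obtain ⟨x, hx⟩ : ∃ x, θ * #𝓐 < #{A ∈ 𝓐 | x ∈ A} := by simpa [IsSpread] using h𝓐
  set 𝓐₁ := 𝓐.filter (x ∉ ·)
  have hsplit : (#𝓐₁ : ℝ) = #𝓐 - #{A ∈ 𝓐 | x ∈ A} := by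
    rw [eq_sub_iff_add_eq, add_comm]; exact_mod_cast card_filter_add_card_filter_not _
  have hshrink : (#𝓐₁ : ℝ) ≤ (1 - θ) * #𝓐 := by linarith
  have h𝓐₁ : 𝓐₁ ⊂ 𝓐 := by
    refine Finset.ssubset_iff_subset_ne.mpr ⟨filter_subset _ _, fun h => ?_⟩
    rw [h] at hsplit
    nlinarith [mul_nonneg hθ0 (Nat.cast_nonneg (α := ℝ) #𝓐)]
  obtain ⟨𝓑, h𝓑, hspread, C, hC, hCcard⟩ := ih 𝓐₁ h𝓐₁
  refine ⟨𝓑, h𝓑.trans (filter_subset _ _), hspread, insert x C, ?_, fun _ => ?_⟩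
  · intro A hA
    obtain ⟨hA𝓐, hA𝓑⟩ := mem_sdiff.mp hA
    by_cases hxA : x ∈ A
    · exact ⟨x, mem_inter.mpr ⟨mem_insert_self _ _, hxA⟩⟩
    · obtain ⟨y, hy⟩ := hC A (mem_sdiff.mpr ⟨mem_filter.mpr ⟨hA𝓐, hxA⟩, hA𝓑⟩)
      exact ⟨y, inter_subset_inter_right (subset_insert _ _) hy⟩
  have h1θ : 0 ≤ 1 - θ := by linarith
  have hC' : 1 ≤ (1 - θ) ^ #C * #𝓐 := by
    rcases C.eq_empty_or_nonempty with rfl | hCne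
    · simpa using (card_lt_card h𝓐₁).trans_le' (Nat.zero_le _)
    calc (1 : ℝ) ≤ (1 - θ) ^ (#C - 1) * #𝓐₁ := hCcard hCne
      _ ≤ (1 - θ) ^ (#C - 1) * ((1 - θ) * #𝓐) := by gcongr
      _ = (1 - θ) ^ #C * #𝓐 := by
        rw [← mul_assoc, pow_sub_one_mul hCne.card_pos.ne']
  calc (1 : ℝ) ≤ (1 - θ) ^ #C * #𝓐 := hC'
    _ ≤ (1 - θ) ^ (#(insert x C) - 1) * #𝓐 := by
      refine mul_le_mul_of_nonneg_right (pow_le_pow_of_le_one h1θ (by linarith) ?_) (by positivity)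
      have := card_insert_le x C
      omega

lemma nat_mul_le_of_one_le_one_sub_pow_mul_exp {θ m : ℝ} {k : ℕ} (hθ : θ ≤ 1)
    (h : 1 ≤ (1 - θ) ^ k * Real.exp m) : k * θ ≤ m := by
  have hpow : (1 - θ) ^ k ≤ Real.exp (k * -θ) := by
    rw [Real.exp_nat_mul]
    exact pow_le_pow_left₀ (by linarith) (by linarith [Real.add_one_le_exp (-θ)]) k
  have : 1 ≤ Real.exp (m - k * θ) := by
    calc 1 ≤ (1 - θ) ^ k * Real.exp m := h
      _ ≤ Real.exp (k * -θ) * Real.exp m := by gcongr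
      _ = Real.exp (m - k * θ) := by rw [← Real.exp_add]; ring_nf
  linarith [Real.one_le_exp_iff.mp this]

lemma exists_subset_covNum_sdiff_le_and_isSpread {m t : ℝ} (hm : 1 ≤ m) (ht : 0 < t)
    {𝓐 : Finset (Finset α)} (h𝓐 : (#𝓐 : ℝ) ≤ Real.exp m) :
    ∃ 𝓑 ⊆ 𝓐, (covNum (𝓐 \ 𝓑) : ℝ) ≤ t / 2 ∧ IsSpread (4 * m / t) 𝓑 := by
  obtain hθ | hθ := le_or_gt 1 (4 * m / t)
  · exact ⟨𝓐, Subset.rfl, by simp [covNum_empty]; positivity, isSpread_of_one_le hθ 𝓐⟩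
  obtain ⟨𝓑, h𝓑, hspread, C, hC, hCcard⟩ :=
    exists_isSpread_and_isCover_sdiff (by positivity) hθ 𝓐
  refine ⟨𝓑, h𝓑, ?_, hspread⟩
  have h4mt : 4 * m < t := by rwa [div_lt_one ht] at hθ
  calc (covNum (𝓐 \ 𝓑) : ℝ) ≤ #C := by exact_mod_cast covNum_le_card hC
    _ ≤ t / 2 := by
      rcases C.eq_empty_or_nonempty with rfl | hCne
      · simp; positivity
      have hk : ((#C - 1 : ℕ) : ℝ) * (4 * m / t) ≤ m :=
        nat_mul_le_of_one_le_one_sub_pow_mul_exp hθ.le ((hCcard hCne).trans (by gcongr))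
      rw [Nat.cast_sub hCne.card_pos, Nat.cast_one, mul_div_assoc', div_le_iff₀ ht] at hk
      nlinarith

lemma sum_card_filter_mem_eq_mul_card [Fintype α] {𝓑 : Finset (Finset α)} {n : ℕ}
    (hn : ∀ A ∈ 𝓑, #A = n) : ∑ x, #{A ∈ 𝓑 | x ∈ A} = n * #𝓑 := by
  refine (sum_card_bipartiteAbove_eq_sum_card_bipartiteBelow (s := 𝓑) (t := univ)
    (r := fun A x => x ∈ A)).symm.trans ?_
  simp [bipartiteAbove, sum_const_nat hn, mul_comm]

lemma sum_card_iInter_eq_sum_pow [Fintype α] (𝓑 : Finset (Finset α)) (i : ℕ) :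
    ∑ v ∈ Fintype.piFinset (fun _ : Fin i => 𝓑), #{x | ∀ j, x ∈ v j} =
      ∑ x, #{A ∈ 𝓑 | x ∈ A} ^ i := by
  refine (sum_card_bipartiteAbove_eq_sum_card_bipartiteBelow (t := univ)
    (r := fun (v : Fin i → Finset α) x => ∀ j, x ∈ v j)).trans ?_
  refine sum_congr rfl fun x _ => ?_
  have : (Fintype.piFinset fun _ : Fin i => 𝓑).bipartiteBelow (fun v x => ∀ j, x ∈ v j) x =
      Fintype.piFinset fun _ => {A ∈ 𝓑 | x ∈ A} := by
    ext v
    simp [bipartiteBelow, Fintype.mem_piFinset, forall_and]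
  simp [this, Fintype.card_piFinset]

lemma sum_pow_le_pow_mul_sum {ι : Type*} (s : Finset ι) {f : ι → ℝ} {M : ℝ}
    (hf0 : ∀ x ∈ s, 0 ≤ f x) (hfM : ∀ x ∈ s, f x ≤ M) {i : ℕ} (hi : i ≠ 0) :
    ∑ x ∈ s, f x ^ i ≤ M ^ (i - 1) * ∑ x ∈ s, f x := by
  rw [mul_sum]
  refine sum_le_sum fun x hx => ?_
  rw [← pow_sub_one_mul hi]
  exact mul_le_mul_of_nonneg_right (pow_le_pow_left₀ (hf0 x hx) (hfM x hx) _) (hf0 x hx)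

lemma IsSpread.sum_card_iInter_div_le [Fintype α] {θ : ℝ} {𝓑 : Finset (Finset α)}
    (h : IsSpread θ 𝓑) (hθ : 0 ≤ θ) {n : ℕ} (hn : ∀ A ∈ 𝓑, #A = n) {i : ℕ} (hi : i ≠ 0) :
    (∑ v ∈ Fintype.piFinset (fun _ : Fin i => 𝓑), (#{x | ∀ j, x ∈ v j} : ℝ)) / (#𝓑 : ℝ) ^ i ≤
      θ ^ (i - 1) * n := by
  rcases 𝓑.eq_empty_or_nonempty with rfl | h𝓑
  · simp [zero_pow hi]; positivity
  rw [div_le_iff₀ (by have := h𝓑.card_pos; positivity)]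
  have hsum := congrArg (Nat.cast (R := ℝ)) (sum_card_iInter_eq_sum_pow 𝓑 i)
  have hdeg := congrArg (Nat.cast (R := ℝ)) (sum_card_filter_mem_eq_mul_card hn)
  push_cast at hsum hdeg
  calc _ = ∑ x, (#{A ∈ 𝓑 | x ∈ A} : ℝ) ^ i := hsum
    _ ≤ (θ * #𝓑) ^ (i - 1) * ∑ x, (#{A ∈ 𝓑 | x ∈ A} : ℝ) :=
      sum_pow_le_pow_mul_sum _ (fun _ _ => by positivity) (fun x _ => h x) hi
    _ = θ ^ (i - 1) * n * (#𝓑 : ℝ) ^ i := by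
      rw [hdeg, mul_pow, ← pow_sub_one_mul hi (#𝓑 : ℝ)]; ring

lemma four_pow_pred_le_two_pow_sq (l : ℕ) : (4 : ℝ) ^ (l - 1) ≤ 2 ^ (l ^ 2) := by
  rw [show (4 : ℝ) = 2 ^ 2 by norm_num, ← pow_mul]
  exact pow_le_pow_right₀ (by norm_num) (by cases l <;> simp [Nat.pow_two]; nlinarith)

end

theorem stmt12 : ∃ K : ℝ, 0 < K ∧ ∀ l : ℕ, 1 ≤ l →
    ∃ Cl : ℝ, 0 < Cl ∧ Cl ≤ K * 2 ^ (l ^ 2) ∧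
    ∀ (β : Type) (_ : Fintype β) (_ : DecidableEq β) (n : ℕ) (m t : ℝ),
      1 ≤ n → 1 ≤ m → 1 ≤ t →
      ∀ 𝓐 : Finset (Finset β), (∀ A ∈ 𝓐, A.card = n) → (𝓐.card : ℝ) ≤ Real.exp m →
      t ≤ (covNum 𝓐 : ℝ) →
      ∃ 𝓐' ⊆ 𝓐, (covNum (𝓐 \ 𝓐') : ℝ) ≤ t / 2 ∧
        ∀ i : ℕ, 1 ≤ i → i ≤ l →
          (∑ v ∈ Fintype.piFinset (fun _ : Fin i => 𝓐'),
              ((Finset.univ.filter (fun x => ∀ j, x ∈ v j)).card : ℝ)) / (𝓐'.card : ℝ) ^ i ≤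
            Cl * (m / t) ^ (i - 1) * n := by
  refine ⟨1, one_pos, fun l _ => ⟨4 ^ (l - 1), by positivity,
    by rw [one_mul]; exact four_pow_pred_le_two_pow_sq l, ?_⟩⟩
  intro β _ _ n m t _ hm ht 𝓐 hn h𝓐 _
  obtain ⟨𝓑, h𝓑𝓐, hcov, hspread⟩ :=
    exists_subset_covNum_sdiff_le_and_isSpread (t := t) hm (by linarith) h𝓐
  refine ⟨𝓑, h𝓑𝓐, hcov, fun i hi hil => ?_⟩
  calc _ ≤ (4 * m / t) ^ (i - 1) * n :=
        hspread.sum_card_iInter_div_le (by positivity) (fun A hA => hn A (h𝓑𝓐 hA)) (by omega)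
    _ = 4 ^ (i - 1) * (m / t) ^ (i - 1) * n := by rw [mul_div_assoc, mul_pow]
    _ ≤ 4 ^ (l - 1) * (m / t) ^ (i - 1) * n := by gcongr; norm_num
end
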